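/- Let a¹,…,a^{N_r} be pairwise distinct points in ℝ^ν, s > 0, and define h^c : ℝ^ν → ℝ^{N_r} by h^c_r(η) = exp(−‖η − a^r‖²/(ν s²)). Let H be any ℝ^ν-valued random variable whose probability measure P_H has full support ℝ^ν (e.g., has a density positive on ℝ^ν). Then the matrix E[h^c(H) ⊗ h^c(H)] is positive definite in 𝕄_{N_r}. -/

import Mathlib

/-!
Expanding the square, the quadratic form is `∫ (∑ r, w r * h r (H ω)) ^ 2 ∂ℙ`, so it suffices that
the Gaussian sum `f = ∑ r, w r * h r` is nonzero almost surely at `H`. The law of `H` is absolutely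
continuous, so it is enough that `f ≠ 0` Lebesgue-almost everywhere. Choose a unit vector `v` on
which the centres have distinct projections. On every line in direction `v`, `f` restricts to a
one-dimensional Gaussian sum with distinct centres; it is not identically zero (along the ray
through the farthest weighted centre that term dominates) and real-analytic, so its zeros are
countable. Disintegrating Lebesgue measure along these lines concludes.
-/

open MeasureTheory Filter Set Topology Function
open scoped RealInnerProductSpace

section GaussianSums

variable {E : Type*} [NormedAddCommGroup E] [InnerProductSpace ℝ E] {ι : Type*}

theorem real_inner_lt_norm_sq_of_norm_le_of_ne {x y : E} (hle : ‖x‖ ≤ ‖y‖) (hne : x ≠ y) :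
    ⟪x, y⟫ < ‖y‖ ^ 2 := by
  have hpos : 0 < ‖x - y‖ ^ 2 := pow_pos (norm_pos_iff.2 (sub_ne_zero.2 hne)) 2
  rw [norm_sub_sq_real] at hpos
  nlinarith [pow_le_pow_left₀ (norm_nonneg x) hle 2]

theorem norm_smul_sub_sq_sub_norm_smul_sub_sq (t : ℝ) (x y : E) :
    ‖t • y - x‖ ^ 2 - ‖t • y - y‖ ^ 2 = 2 * (‖y‖ ^ 2 - ⟪x, y⟫) * t + (‖x‖ ^ 2 - ‖y‖ ^ 2) := by
  simp only [norm_sub_sq_real, real_inner_smul_left, norm_smul, real_inner_self_eq_norm_sq,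
    real_inner_comm x y, Real.norm_eq_abs, mul_pow, sq_abs]
  ring

theorem exists_sum_mul_exp_neg_norm_sub_sq_ne_zero [Fintype ι] {a : ι → E} (ha : Injective a)
    {c : ℝ} (hc : 0 < c) {w : ι → ℝ} (hw : w ≠ 0) :
    ∃ η, ∑ i, w i * Real.exp (-‖η - a i‖ ^ 2 / c) ≠ 0 := by
  classical
  obtain ⟨i₀, hi₀, hmax⟩ := (Finset.univ.filter (w · ≠ 0)).exists_max_image (‖a ·‖)
    (by simpa [Finset.filter_nonempty_iff, Function.ne_iff] using hw)
  simp only [Finset.mem_filter, Finset.mem_univ, true_and] at hi₀ hmax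
  -- `a i₀` is a farthest centre carrying weight; along its ray the `i₀`-th term dominates
  set D : ι → ℝ → ℝ := fun i t => ‖t • a i₀ - a i‖ ^ 2 - ‖t • a i₀ - a i₀‖ ^ 2
  have hterm : ∀ i, Tendsto (fun t => w i * Real.exp (-D i t / c)) atTop
      (𝓝 (if i = i₀ then w i₀ else 0)) := by
    intro i
    by_cases hi : i = i₀
    · subst hi
      simp [D]
    by_cases hwi : w i = 0
    · simp [hi, hwi]
    have hslope : 0 < 2 * (‖a i₀‖ ^ 2 - ⟪a i, a i₀⟫) := by
      linarith [real_inner_lt_norm_sq_of_norm_le_of_ne (hmax i hwi) (ha.ne hi)]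
    have hD : Tendsto (D i) atTop atTop := by
      simp only [D, norm_smul_sub_sq_sub_norm_smul_sub_sq]
      exact tendsto_atTop_add_const_right _ _ (tendsto_id.const_mul_atTop hslope)
    simpa [hi] using ((Real.tendsto_exp_atBot.comp
      ((tendsto_neg_atTop_atBot.comp hD).atBot_div_const hc)).const_mul (w i))
  have hlim : Tendsto (fun t => ∑ i, w i * Real.exp (-D i t / c)) atTop (𝓝 (w i₀)) := by
    simpa using tendsto_finsetSum Finset.univ fun i _ => hterm i
  have hfactor : ∀ t, ∑ i, w i * Real.exp (-D i t / c) = Real.exp (‖t • a i₀ - a i₀‖ ^ 2 / c) *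
      ∑ i, w i * Real.exp (-‖t • a i₀ - a i‖ ^ 2 / c) := by
    intro t
    rw [Finset.mul_sum]
    refine Finset.sum_congr rfl fun i _ => ?_
    rw [mul_left_comm, ← Real.exp_add]
    congr 2
    ring
  obtain ⟨t, ht⟩ := (hlim.eventually_ne hi₀).exists
  exact ⟨t • a i₀, fun h => ht (by rw [hfactor, h, mul_zero])⟩

theorem exists_norm_eq_one_injective_inner [Nontrivial E] [Finite ι] {a : ι → E}
    (ha : Injective a) : ∃ v : E, ‖v‖ = 1 ∧ Injective fun i => ⟪v, a i⟫ := by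
  classical
  have := Fintype.ofFinite ι
  let p : Option {q : ι × ι // q.1 ≠ q.2} → Submodule ℝ E
    | none => ⊥
    | some q => (ℝ ∙ (a q.1.1 - a q.1.2))ᗮ
  have hp : ∀ q, p q ≠ ⊤ := by
    rintro (_ | q)
    · exact bot_ne_top
    · rw [Ne, Submodule.orthogonal_eq_top_iff, Submodule.span_singleton_eq_bot]
      exact sub_ne_zero.2 (ha.ne q.2)
  obtain ⟨v, -, hv⟩ := exists_of_ssubset
    (Submodule.iUnion_ssubset_of_forall_ne_top_of_card_lt Finset.univ p hp
      (by rw [ENat.card_eq_top_of_infinite]; exact ENat.natCast_lt_top _))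
  simp only [Finset.mem_univ, iUnion_true, mem_iUnion, SetLike.mem_coe, not_exists] at hv
  have hv0 : v ≠ 0 := fun h => hv none (by simp [p, h])
  refine ⟨‖v‖⁻¹ • v, norm_smul_inv_norm hv0, fun i j hij => ?_⟩
  by_contra hne
  apply hv (some ⟨(i, j), hne⟩)
  simp only [real_inner_smul_left, mul_right_inj' (inv_ne_zero (norm_ne_zero_iff.2 hv0))] at hij
  simp [p, Submodule.mem_orthogonal_singleton_iff_inner_right, inner_sub_left, real_inner_comm, hij]

theorem norm_add_smul_sub_sq {v : E} (hv : ‖v‖ = 1) (y x : E) (t : ℝ) :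
    ‖y + t • v - x‖ ^ 2 = (t - ⟪v, x - y⟫) ^ 2 + (‖x - y‖ ^ 2 - ⟪v, x - y⟫ ^ 2) := by
  rw [show y + t • v - x = t • v - (x - y) by abel, norm_sub_sq_real, real_inner_smul_left,
    norm_smul, hv, Real.norm_eq_abs, mul_one, sq_abs]
  ring

theorem AnalyticOnNhd.ae_ne_zero {F : Type*} [NormedAddCommGroup F] [NormedSpace ℝ F]
    {μ : Measure ℝ} [NullSingletonClass μ] {g : ℝ → F} (hg : AnalyticOnNhd ℝ g univ) {x : ℝ}
    (hx : g x ≠ 0) : ∀ᵐ t ∂μ, g t ≠ 0 := by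
  have h := ae_restrict_le_codiscreteWithin (μ := μ) MeasurableSet.univ
    (hg.preimage_zero_mem_codiscrete hx)
  rwa [Measure.restrict_univ] at h

theorem ae_sum_mul_exp_neg_norm_sub_sq_ne_zero [Nontrivial E] [FiniteDimensional ℝ E]
    [MeasurableSpace E] [BorelSpace E] (μ : Measure E) [μ.IsAddHaarMeasure] [Fintype ι]
    {a : ι → E} (ha : Injective a) {c : ℝ} (hc : 0 < c) {w : ι → ℝ} (hw : w ≠ 0) :
    ∀ᵐ η ∂μ, ∑ i, w i * Real.exp (-‖η - a i‖ ^ 2 / c) ≠ 0 := by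
  obtain ⟨v, hv, hinj⟩ := exists_norm_eq_one_injective_inner ha
  have hmeas : MeasurableSet {η : E | ∑ i, w i * Real.exp (-‖η - a i‖ ^ 2 / c) ≠ 0} :=
    (isClosed_eq (by fun_prop) continuous_const).isOpen_compl.measurableSet
  refine ae_mem_of_ae_add_linearMap_mem (LinearMap.toSpanSingleton ℝ E v) volume μ hmeas
    fun y => ?_
  set α : ι → ℝ := fun i => ⟪v, a i - y⟫
  set w' : ι → ℝ := fun i => w i * Real.exp (-(‖a i - y‖ ^ 2 - α i ^ 2) / c)
  have hline : ∀ t : ℝ, ∑ i, w i * Real.exp (-‖y + t • v - a i‖ ^ 2 / c) =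
      ∑ i, w' i * Real.exp (-(t - α i) ^ 2 / c) := by
    intro t
    refine Finset.sum_congr rfl fun i _ => ?_
    rw [norm_add_smul_sub_sq hv, mul_assoc, ← Real.exp_add]
    congr 2
    ring
  have hα : Injective α := fun i j hij => hinj (by simpa [α, inner_sub_right] using hij)
  have hw' : w' ≠ 0 := by
    obtain ⟨i, hi⟩ := Function.ne_iff.1 hw
    exact Function.ne_iff.2 ⟨i, mul_ne_zero hi (Real.exp_pos _).ne'⟩
  obtain ⟨t₀, ht₀⟩ := exists_sum_mul_exp_neg_norm_sub_sq_ne_zero hα hc hw'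
  simp only [Real.norm_eq_abs, sq_abs] at ht₀
  have hana : AnalyticOnNhd ℝ (fun t => ∑ i, w' i * Real.exp (-(t - α i) ^ 2 / c)) univ :=
    fun t _ => by fun_prop
  filter_upwards [hana.ae_ne_zero ht₀] with t ht
  rw [← hline] at ht
  exact ht

end GaussianSums

section Integrals

variable {Ω ι : Type*} [MeasurableSpace Ω] {μ : Measure Ω}

theorem integral_pos_of_ae_pos [NeZero μ] {f : Ω → ℝ} (hfi : Integrable f μ)
    (hf : ∀ᵐ ω ∂μ, 0 < f ω) : 0 < ∫ ω, f ω ∂μ := by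
  have hnull : μ (support f)ᶜ = 0 :=
    measure_mono_null (fun ω (hω : ω ∉ support f) hpos => hω (ne_of_gt hpos)) (ae_iff.1 hf)
  rw [integral_pos_iff_support_of_nonneg_ae (hf.mono fun _ h => h.le) hfi,
    measure_congr (ae_eq_univ.2 hnull)]
  exact Measure.measure_univ_pos.2 (NeZero.ne μ)

theorem sq_sum_mul [Fintype ι] (w x : ι → ℝ) :
    (∑ i, w i * x i) ^ 2 = ∑ i, ∑ j, w i * w j * (x i * x j) := by
  rw [sq, Finset.sum_mul_sum]
  exact Finset.sum_congr rfl fun i _ => Finset.sum_congr rfl fun j _ => by ring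

variable [Fintype ι] (w : ι → ℝ) {g : ι → Ω → ℝ}

theorem integrable_sq_sum_mul (hg : ∀ i j, Integrable (fun ω => g i ω * g j ω) μ) :
    Integrable (fun ω => (∑ i, w i * g i ω) ^ 2) μ := by
  simp_rw [sq_sum_mul]
  exact integrable_finsetSum _ fun i _ => integrable_finsetSum _ fun j _ =>
    (hg i j).const_mul _

theorem sum_sum_mul_integral_mul_eq_integral_sq
    (hg : ∀ i j, Integrable (fun ω => g i ω * g j ω) μ) :
    ∑ i, ∑ j, w i * w j * ∫ ω, g i ω * g j ω ∂μ = ∫ ω, (∑ i, w i * g i ω) ^ 2 ∂μ := by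
  simp_rw [sq_sum_mul]
  rw [integral_finsetSum _ fun i _ => integrable_finsetSum _ fun j _ => (hg i j).const_mul _]
  refine Finset.sum_congr rfl fun i _ => ?_
  rw [integral_finsetSum _ fun j _ => (hg i j).const_mul _]
  simp_rw [integral_const_mul]

end Integrals

theorem stmt13_general {Ω : Type*} [MeasurableSpace Ω] (ℙ : Measure Ω) [IsProbabilityMeasure ℙ]
    (ν : ℕ) (hν : 1 ≤ ν) (Nr : ℕ) (s : ℝ) (hs : 0 < s)
    (a : Fin Nr → EuclideanSpace ℝ (Fin ν)) (ha : Function.Injective a)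
    (H : Ω → EuclideanSpace ℝ (Fin ν)) (hH : Measurable H)
    (p : EuclideanSpace ℝ (Fin ν) → ℝ)
    (hlaw : Measure.map H ℙ = volume.withDensity (fun η => ENNReal.ofReal (p η)))
    (h : Fin Nr → EuclideanSpace ℝ (Fin ν) → ℝ)
    (hh : ∀ r η, h r η = Real.exp (-‖η - a r‖ ^ 2 / (ν * s ^ 2)))
    (w : Fin Nr → ℝ) (hw : w ≠ 0) :
    0 < ∑ r, ∑ r', w r * w r' * ∫ ω, h r (H ω) * h r' (H ω) ∂ℙ := by
  have : NeZero ν := ⟨by omega⟩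
  have hc : 0 < (ν : ℝ) * s ^ 2 := by positivity
  have hle : ∀ r η, ‖h r η‖ ≤ 1 := fun r η => by
    rw [hh, Real.norm_eq_abs, Real.abs_exp, Real.exp_le_one_iff]
    exact div_nonpos_of_nonpos_of_nonneg (neg_nonpos.2 (by positivity)) hc.le
  have hcont : ∀ r, Continuous (h r) := fun r => by
    rw [funext (hh r)]
    fun_prop
  have hint : ∀ r r', Integrable (fun ω => h r (H ω) * h r' (H ω)) ℙ := fun r r' =>
    Integrable.of_bound (by fun_prop) 1 (.of_forall fun ω => by
      rw [norm_mul]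
      exact mul_le_one₀ (hle r _) (norm_nonneg _) (hle r' _))
  have hne : ∀ᵐ ω ∂ℙ, ∑ r, w r * h r (H ω) ≠ 0 := by
    refine ae_of_ae_map (p := fun η => ∑ r, w r * h r η ≠ 0) hH.aemeasurable ?_
    rw [hlaw]
    simp_rw [hh]
    exact (withDensity_absolutelyContinuous _ _).ae_le
      (ae_sum_mul_exp_neg_norm_sub_sq_ne_zero volume ha hc hw)
  rw [sum_sum_mul_integral_mul_eq_integral_sq w hint]
  exact integral_pos_of_ae_pos (integrable_sq_sum_mul w hint) (hne.mono fun _ h => by positivity)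

theorem stmt13 {Ω : Type*} [MeasurableSpace Ω] (ℙ : Measure Ω) [IsProbabilityMeasure ℙ]
    (ν : ℕ) (hν : 1 ≤ ν) (Nr : ℕ) (s : ℝ) (hs : 0 < s)
    (a : Fin Nr → EuclideanSpace ℝ (Fin ν)) (ha : Function.Injective a)
    (H : Ω → EuclideanSpace ℝ (Fin ν)) (hH : Measurable H)
    (p : EuclideanSpace ℝ (Fin ν) → ℝ) (hppos : ∀ η, 0 < p η)
    (hlaw : Measure.map H ℙ = volume.withDensity (fun η => ENNReal.ofReal (p η)))
    (h : Fin Nr → EuclideanSpace ℝ (Fin ν) → ℝ)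
    (hh : ∀ r η, h r η = Real.exp (-‖η - a r‖ ^ 2 / (ν * s ^ 2)))
    (w : Fin Nr → ℝ) (hw : w ≠ 0) :
    0 < ∑ r, ∑ r', w r * w r' * ∫ ω, h r (H ω) * h r' (H ω) ∂ℙ :=
  stmt13_general ℙ ν hν Nr s hs a ha H hH p hlaw h hh w hw
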